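/- Let O be the ring of integers of a number field, 𝔭 a nonzero prime ideal with residue field of cardinality q, f ≥ 1, and 1 ≤ m ≤ f−1. Then the order of the m-th symplectic group Sp_{2n}^{(m)}(O/𝔭^f) equals q^{4n²(f−m)} · |Sp_{2n}(O/𝔭^m)|. -/

import Mathlib

/-!
Reduction modulo `𝔭^m` maps `GL_{2n}(O/𝔭^f)` onto `GL_{2n}(O/𝔭^m)`: the kernel of `O/𝔭^f → O/𝔭^m`
is nil, so a matrix is invertible as soon as its reduction is. By definition
`Sp^{(m)}` is the full preimage of `Sp_{2n}(O/𝔭^m)`, so its order is `|Sp_{2n}(O/𝔭^m)|` times the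
order of the congruence kernel `1 + M_{2n}(𝔭^m/𝔭^f)`, which is `(q^{f-m})^{4n²}`.
-/

open scoped Classical
open Matrix

noncomputable def qPoch (q : ℝ) (j : ℕ) : ℝ := ∏ i ∈ Finset.range j, (1 - q⁻¹ ^ (i + 1))
noncomputable def qPochInf (q : ℝ) : ℝ := ∏' i : ℕ, (1 - q⁻¹ ^ (i + 1))

/-- The standard symplectic form matrix `J = [[0,1],[-1,0]]`. -/
def Jmat (n : ℕ) (R : Type) [CommRing R] : Matrix (Fin n ⊕ Fin n) (Fin n ⊕ Fin n) R :=
  Matrix.fromBlocks 0 1 (-1) 0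

/-- The symplectic group `Sp_{2n}(R) = {h ∈ GL_{2n}(R) : hᵀ J h = J}` as a subset of `GL`. -/
def SpSet (n : ℕ) (R : Type) [CommRing R] :
    Set (Matrix.GeneralLinearGroup (Fin n ⊕ Fin n) R) :=
  {h | (h : Matrix (Fin n ⊕ Fin n) (Fin n ⊕ Fin n) R)ᵀ * Jmat n R * h = Jmat n R}

/-- The `m`-th symplectic group `Sp_{2n}^{(m)}(O/𝔭^f)`:
matrices `h ∈ GL_{2n}(O/𝔭^f)` with `hᵀ J h ≡ J (mod 𝔭^m)`. -/
noncomputable def SpmSet (n : ℕ) {O : Type} [CommRing O] (𝔭 : Ideal O) (f m : ℕ) (h : m ≤ f) :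
    Set (Matrix.GeneralLinearGroup (Fin n ⊕ Fin n) (O ⧸ 𝔭 ^ f)) :=
  {A | (Ideal.Quotient.factor (S := 𝔭 ^ f) (T := 𝔭 ^ m) (Ideal.pow_le_pow_right h)).mapMatrix
        ((A : Matrix (Fin n ⊕ Fin n) (Fin n ⊕ Fin n) (O ⧸ 𝔭 ^ f))ᵀ * Jmat n (O ⧸ 𝔭 ^ f) *
          (A : Matrix (Fin n ⊕ Fin n) (Fin n ⊕ Fin n) (O ⧸ 𝔭 ^ f)))
      = (Ideal.Quotient.factor (S := 𝔭 ^ f) (T := 𝔭 ^ m)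
          (Ideal.pow_le_pow_right h)).mapMatrix (Jmat n (O ⧸ 𝔭 ^ f))}

theorem MonoidHom.card_preimage_of_surjective {G H : Type*} [Group G] [Group H] (φ : G →* H)
    (hφ : Function.Surjective φ) (T : Set H) :
    Nat.card (φ ⁻¹' T) = Nat.card φ.ker * Nat.card T := by
  let e := QuotientGroup.quotientKerEquivOfSurjective φ hφ
  have hpre : φ ⁻¹' T = QuotientGroup.mk ⁻¹' (e ⁻¹' T) := rfl
  rw [hpre, QuotientGroup.card_preimage_mk,
    Nat.card_preimage_of_injective e.injective (e.surjective.range_eq ▸ Set.subset_univ T)]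

theorem isLocalHom_of_surjective_of_ker_le_jacobson {R S : Type*} [CommRing R] [Ring S]
    (π : R →+* S) (hπ : Function.Surjective π) (hker : RingHom.ker π ≤ Ideal.jacobson ⊥) :
    IsLocalHom π where
  map_nonunit x hx := by
    obtain ⟨y, hy⟩ := hπ ↑hx.unit⁻¹
    have hxy : x * y - 1 ∈ Ideal.jacobson ⊥ := hker (by simp [hy])
    have := Ideal.mem_jacobson_bot.1 hxy 1
    rw [mul_one, sub_add_cancel] at this
    exact isUnit_of_mul_isUnit_left this

theorem RingHom.isLocalHom_mapMatrix {R S : Type*} [CommRing R] [CommRing S] (π : R →+* S)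
    [IsLocalHom π] (ι : Type*) [Fintype ι] [DecidableEq ι] :
    IsLocalHom (π.mapMatrix : Matrix ι ι R →+* Matrix ι ι S) where
  map_nonunit M hM := by
    rw [Matrix.isUnit_iff_isUnit_det] at hM ⊢
    exact IsUnit.of_map π _ (by rwa [RingHom.map_det])

theorem RingHom.mapMatrix_surjective {R S : Type*} [Semiring R] [Semiring S] (π : R →+* S)
    (hπ : Function.Surjective π) (ι : Type*) [Fintype ι] [DecidableEq ι] :
    Function.Surjective (π.mapMatrix : Matrix ι ι R →+* Matrix ι ι S) :=
  fun M => ⟨M.map (Function.surjInv hπ), by ext; simp [Function.surjInv_eq hπ]⟩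

theorem RingHom.card_ker_units_map {A B : Type*} [Ring A] [Ring B] (ψ : A →+* B) [IsLocalHom ψ] :
    Nat.card (Units.map ψ.toMonoidHom).ker = Nat.card (RingHom.ker ψ) := by
  have hunit (a : RingHom.ker ψ) : IsUnit (1 + (a : A)) :=
    IsUnit.of_map ψ _ (by simp [RingHom.mem_ker.1 a.2])
  refine Nat.card_congr
    { toFun := fun u => ⟨(u : Aˣ) - 1, ?_⟩
      invFun := fun a => ⟨(hunit a).unit, ?_⟩
      left_inv := fun u => ?_
      right_inv := fun a => ?_ }
  · simpa [sub_eq_zero] using congrArg Units.val (MonoidHom.mem_ker.1 u.2)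
  · exact MonoidHom.mem_ker.2 (Units.ext (by simp [RingHom.mem_ker.1 a.2]))
  · exact Subtype.ext (Units.ext (add_sub_cancel 1 _))
  · exact Subtype.ext (add_sub_cancel_left 1 _)

theorem RingHom.card_preimage_units_map {A B : Type*} [Ring A] [Ring B] (ψ : A →+* B)
    (hψ : Function.Surjective ψ) [IsLocalHom ψ] (T : Set Bˣ) :
    Nat.card (Units.map ψ.toMonoidHom ⁻¹' T) = Nat.card (RingHom.ker ψ) * Nat.card T := by
  rw [MonoidHom.card_preimage_of_surjective _
    (IsLocalRing.surjective_units_map_of_local_ringHom ψ hψ ‹_›), RingHom.card_ker_units_map]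

theorem RingHom.card_ker_mapMatrix {R S : Type*} [Semiring R] [Semiring S] (π : R →+* S)
    (ι : Type*) [Fintype ι] [DecidableEq ι] :
    Nat.card (RingHom.ker (π.mapMatrix : Matrix ι ι R →+* Matrix ι ι S)) =
      Nat.card (RingHom.ker π) ^ (Fintype.card ι * Fintype.card ι) := by
  have e : RingHom.ker (π.mapMatrix : Matrix ι ι R →+* Matrix ι ι S) ≃ (ι → ι → RingHom.ker π) :=
    { toFun := fun M i j => ⟨M.1 i j, by
        simpa using Matrix.ext_iff.2 (RingHom.mem_ker.1 M.2) i j⟩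
      invFun := fun N => ⟨Matrix.of fun i j => N i j, by ext i j; simp [RingHom.mem_ker.1 (N i j).2]⟩
      left_inv := fun M => rfl
      right_inv := fun N => rfl }
  rw [Nat.card_congr e, Nat.card_fun, Nat.card_fun, ← pow_mul, Nat.card_eq_fintype_card (α := ι)]

theorem Ideal.card_quotient_pow {S : Type*} [CommRing S] [IsDedekindDomain S]
    [Module.Free ℤ S] (I : Ideal S) (k : ℕ) : Nat.card (S ⧸ I ^ k) = Nat.card (S ⧸ I) ^ k := by
  simp only [← Submodule.cardQuot_apply, ← Ideal.absNorm_apply, map_pow]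

theorem Ideal.card_ker_factor_pow {S : Type*} [CommRing S] [IsDedekindDomain S]
    [Module.Free ℤ S] [Module.Finite ℤ S] {I : Ideal S} (hI : I ≠ ⊥) {m f : ℕ} (hmf : m ≤ f) :
    Nat.card (RingHom.ker (Ideal.Quotient.factor (Ideal.pow_le_pow_right (I := I) hmf))) =
      Nat.card (S ⧸ I) ^ (f - m) := by
  set π := Ideal.Quotient.factor (Ideal.pow_le_pow_right (I := I) hmf)
  have hcard : Nat.card (S ⧸ I ^ f) = Nat.card (RingHom.ker π) * Nat.card (S ⧸ I ^ m) := by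
    rw [AddSubgroup.card_eq_card_quotient_mul_card_addSubgroup π.toAddMonoidHom.ker, mul_comm,
      Nat.card_congr (QuotientAddGroup.quotientKerEquivOfSurjective π.toAddMonoidHom
        (Ideal.Quotient.factor_surjective (Ideal.pow_le_pow_right hmf))).toEquiv]
    rfl
  have hq : Nat.card (S ⧸ I) ≠ 0 := by
    rwa [← Submodule.cardQuot_apply, ← Ideal.absNorm_apply, Ne, Ideal.absNorm_eq_zero_iff]
  rw [Ideal.card_quotient_pow, Ideal.card_quotient_pow, ← pow_sub_mul_pow _ hmf] at hcard
  exact (Nat.eq_of_mul_eq_mul_right (Nat.pos_of_ne_zero (pow_ne_zero m hq)) hcard).symm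

theorem Ideal.ker_factor_pow_le_jacobson {R : Type*} [CommRing R] (I : Ideal R) {m f : ℕ}
    (hm : m ≠ 0) (hmf : m ≤ f) :
    RingHom.ker (Ideal.Quotient.factor (Ideal.pow_le_pow_right (I := I) hmf)) ≤
      Ideal.jacobson ⊥ := by
  intro x hx
  obtain ⟨a, rfl⟩ := Ideal.Quotient.mk_surjective x
  rw [RingHom.mem_ker, Ideal.Quotient.factor_mk, Ideal.Quotient.eq_zero_iff_mem] at hx
  refine Ideal.radical_le_jacobson (mem_nilradical.2 ⟨f, ?_⟩)
  rw [← map_pow, Ideal.Quotient.eq_zero_iff_mem]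
  exact Ideal.pow_mem_pow (Ideal.pow_le_self hm hx) f

theorem Jmat_map {R S : Type} [CommRing R] [CommRing S] (π : R →+* S) (n : ℕ) :
    (Jmat n R).map π = Jmat n S := by
  simp [Jmat, Matrix.fromBlocks_map, Matrix.map_neg]

theorem SpmSet_eq_preimage_SpSet (n : ℕ) {O : Type} [CommRing O] (𝔭 : Ideal O) (f m : ℕ)
    (h : m ≤ f) :
    SpmSet n 𝔭 f m h = Units.map (Ideal.Quotient.factor (S := 𝔭 ^ f) (T := 𝔭 ^ m)
      (Ideal.pow_le_pow_right h)).mapMatrix.toMonoidHom ⁻¹' SpSet n (O ⧸ 𝔭 ^ m) := by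
  ext A
  simp [SpmSet, SpSet, Jmat_map, Matrix.transpose_map]

theorem card_Spm_general (K : Type) [Field K] [NumberField K]
    (𝔭 : Ideal (NumberField.RingOfIntegers K)) (hbot : 𝔭 ≠ ⊥)
    (f n m : ℕ) (hm : 1 ≤ m) (hmf : m ≤ f - 1)
    (q : ℕ) (hq : q = Nat.card (NumberField.RingOfIntegers K ⧸ 𝔭)) :
    Nat.card (SpmSet n 𝔭 f m (le_trans hmf (Nat.sub_le f 1))) =
      q ^ (4 * n ^ 2 * (f - m)) *
        Nat.card (SpSet n (NumberField.RingOfIntegers K ⧸ 𝔭 ^ m)) := by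
  have hmf' : m ≤ f := le_trans hmf (Nat.sub_le f 1)
  set π := Ideal.Quotient.factor (S := 𝔭 ^ f) (T := 𝔭 ^ m) (Ideal.pow_le_pow_right hmf')
  have hπ : Function.Surjective π := Ideal.Quotient.factor_surjective _
  have : IsLocalHom π := isLocalHom_of_surjective_of_ker_le_jacobson π hπ
    (Ideal.ker_factor_pow_le_jacobson 𝔭 (by omega) hmf')
  have := π.isLocalHom_mapMatrix (Fin n ⊕ Fin n)
  rw [SpmSet_eq_preimage_SpSet, RingHom.card_preimage_units_map _ (π.mapMatrix_surjective hπ _),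
    RingHom.card_ker_mapMatrix, Ideal.card_ker_factor_pow hbot hmf', ← hq, ← pow_mul]
  congr 2
  simp only [Fintype.card_sum, Fintype.card_fin]
  ring

/-- `|Sp_{2n}^{(m)}(O/𝔭^f)| = q^{4n²(f-m)} · |Sp_{2n}(O/𝔭^m)|` for `1 ≤ m ≤ f - 1`. -/
theorem card_Spm (K : Type) [Field K] [NumberField K]
    (𝔭 : Ideal (NumberField.RingOfIntegers K)) (hprime : 𝔭.IsPrime) (hbot : 𝔭 ≠ ⊥)
    (f n m : ℕ) (hf : 1 ≤ f) (hm : 1 ≤ m) (hmf : m ≤ f - 1)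
    (q : ℕ) (hq : q = Nat.card (NumberField.RingOfIntegers K ⧸ 𝔭)) :
    Nat.card (SpmSet n 𝔭 f m (le_trans hmf (Nat.sub_le f 1))) =
      q ^ (4 * n ^ 2 * (f - m)) *
        Nat.card (SpSet n (NumberField.RingOfIntegers K ⧸ 𝔭 ^ m)) :=
  card_Spm_general K 𝔭 hbot f n m hm hmf q hq
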